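/- Let Σ₁ and Σ₂ be symmetric positive definite d×d real matrices, and define A = Σ₂^{1/2}(Σ₂^{1/2} Σ₁ Σ₂^{1/2})^{−1/2} Σ₂^{1/2}. Then A is symmetric positive definite and A Σ₁ A = Σ₂. -/

import Mathlib

open MeasureTheory ProbabilityTheory Matrix
open scoped ENNReal NNReal

noncomputable section

abbrev Ed (d : ℕ) := EuclideanSpace ℝ (Fin d)

/-- A coupling of `μ` and `ν`: a measure on the product whose marginals are `μ` and `ν`. -/
def IsCoupling {d : ℕ} (γ : Measure (Ed d × Ed d)) (μ ν : Measure (Ed d)) : Prop :=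
  γ.map Prod.fst = μ ∧ γ.map Prod.snd = ν

/-- Quadratic transport cost of a coupling. -/
def cost2 {d : ℕ} (γ : Measure (Ed d × Ed d)) : ℝ≥0∞ :=
  ∫⁻ p, ENNReal.ofReal (‖p.1 - p.2‖ ^ 2) ∂γ

/-- Squared 2-Wasserstein distance. -/
def W2sq {d : ℕ} (μ ν : Measure (Ed d)) : ℝ≥0∞ :=
  ⨅ (γ : Measure (Ed d × Ed d)) (_ : IsCoupling γ μ ν), cost2 γ

/-- 2-Wasserstein distance. -/
def W2 {d : ℕ} (μ ν : Measure (Ed d)) : ℝ :=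
  Real.sqrt (W2sq μ ν).toReal

/-- Finite second moment. -/
def FiniteSecondMoment {d : ℕ} (μ : Measure (Ed d)) : Prop :=
  ∫⁻ x, ENNReal.ofReal (‖x‖ ^ 2) ∂μ < ⊤

/-- Mean vector of a measure. -/
def meanVec {d : ℕ} (μ : Measure (Ed d)) : Ed d := ∫ x, x ∂μ

/-- Covariance matrix of a measure. -/
def covMatrix {d : ℕ} (μ : Measure (Ed d)) : Matrix (Fin d) (Fin d) ℝ :=
  Matrix.of fun i j => ∫ x, (x i - meanVec μ i) * (x j - meanVec μ j) ∂μ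

/-- The square root of a positive semidefinite matrix (removed from Mathlib; old definition). -/
def Matrix.PosSemidef.sqrt {n : Type*} [Fintype n] [DecidableEq n]
    {A : Matrix n n ℝ} (hA : A.PosSemidef) : Matrix n n ℝ :=
  hA.1.eigenvectorUnitary.1 * diagonal (Real.sqrt ∘ hA.1.eigenvalues) *
    (star hA.1.eigenvectorUnitary : Matrix n n ℝ)

/-- Positive semidefinite square root of a matrix (junk value `0` if not psd). -/
def msqrt {d : ℕ} (S : Matrix (Fin d) (Fin d) ℝ) : Matrix (Fin d) (Fin d) ℝ :=
  @dite _ S.PosSemidef (Classical.dec _) (fun h => h.sqrt) (fun _ => 0)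

/-- Standard Gaussian measure on `ℝ^d`. -/
def stdGaussian (d : ℕ) : Measure (Ed d) :=
  (Measure.pi fun _ : Fin d => gaussianReal 0 1).map (EuclideanSpace.equiv (Fin d) ℝ).symm

/-- Gaussian measure on `ℝ^d` with mean `m` and covariance `S`. -/
def gaussianE {d : ℕ} (m : Ed d) (S : Matrix (Fin d) (Fin d) ℝ) : Measure (Ed d) :=
  (stdGaussian d).map fun x => m + (msqrt S).toEuclideanLin x

/-- Normal approximation: Gaussian with the same mean and covariance as `μ`. -/
def normalApprox {d : ℕ} (μ : Measure (Ed d)) : Measure (Ed d) :=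
  gaussianE (meanVec μ) (covMatrix μ)

/-! With `B = Σ₂^{1/2}` and `C = (B Σ₁ B)^{1/2}` we have `A = B C⁻¹ B`, a congruence of the
positive definite `C⁻¹` by the symmetric invertible `B`, and
`A Σ₁ A = B C⁻¹ (B Σ₁ B) C⁻¹ B = B C⁻¹ C² C⁻¹ B = B² = Σ₂`. -/

namespace Matrix

variable {n : Type*} [Fintype n] [DecidableEq n]

lemma PosSemidef.sqrt_mul_self {A : Matrix n n ℝ} (hA : A.PosSemidef) :
    hA.sqrt * hA.sqrt = A := by
  set U : Matrix n n ℝ := (hA.1.eigenvectorUnitary : Matrix n n ℝ)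
  set D := diagonal (Real.sqrt ∘ hA.1.eigenvalues)
  have hDD : D * D = diagonal hA.1.eigenvalues := by
    rw [diagonal_mul_diagonal]
    exact congrArg diagonal (funext fun i => Real.mul_self_sqrt (hA.eigenvalues_nonneg i))
  calc hA.sqrt * hA.sqrt = U * (D * (star U * U) * D) * star U := by
        simp only [PosSemidef.sqrt, U, D, Matrix.mul_assoc]
    _ = U * diagonal hA.1.eigenvalues * star U := by
        rw [Unitary.coe_star_mul_self, Matrix.mul_one, hDD]
    _ = A := by simpa using hA.1.spectral_theorem.symm

lemma PosDef.posDef_sqrt {A : Matrix n n ℝ} (hA : A.PosDef) : hA.posSemidef.sqrt.PosDef := by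
  rw [PosSemidef.sqrt, IsUnit.posDef_star_right_conjugate_iff Unitary.isUnit_coe]
  exact posDef_diagonal_iff.mpr fun i => Real.sqrt_pos.mpr (hA.eigenvalues_pos i)

lemma PosDef.conj_of_isHermitian {M B : Matrix n n ℝ} (hM : M.PosDef) (hB : B.IsHermitian)
    (hBu : IsUnit B) : (B * M * B).PosDef := by
  simpa only [star_eq_conjTranspose, hB.eq] using hBu.posDef_star_left_conjugate_iff.mpr hM

lemma mul_inv_mul_conj_eq_mul_self {R : Type*} [CommRing R] {B C S : Matrix n n R}
    (hC : IsUnit C) (h : C * C = B * S * B) :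
    B * C⁻¹ * B * S * (B * C⁻¹ * B) = B * B := by
  have hdet : IsUnit C.det := (isUnit_iff_isUnit_det C).mp hC
  calc B * C⁻¹ * B * S * (B * C⁻¹ * B) = B * (C⁻¹ * (B * S * B) * C⁻¹) * B := by
        simp only [Matrix.mul_assoc]
    _ = B * B := by
        rw [← h]
        simp only [Matrix.mul_assoc, nonsing_inv_mul_cancel_left C _ hdet,
          mul_nonsing_inv_cancel_left C _ hdet]

end Matrix

lemma msqrt_of_posDef {d : ℕ} {S : Matrix (Fin d) (Fin d) ℝ} (hS : S.PosDef) :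
    msqrt S = hS.posSemidef.sqrt :=
  dif_pos hS.posSemidef

lemma posDef_msqrt {d : ℕ} {S : Matrix (Fin d) (Fin d) ℝ} (hS : S.PosDef) :
    (msqrt S).PosDef :=
  msqrt_of_posDef hS ▸ hS.posDef_sqrt

lemma msqrt_mul_self {d : ℕ} {S : Matrix (Fin d) (Fin d) ℝ} (hS : S.PosDef) :
    msqrt S * msqrt S = S :=
  msqrt_of_posDef hS ▸ hS.posSemidef.sqrt_mul_self

/-- The matrix `A = Σ₂^{1/2} (Σ₂^{1/2} Σ₁ Σ₂^{1/2})^{-1/2} Σ₂^{1/2}` is symmetric positive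
definite and satisfies `A Σ₁ A = Σ₂`. -/
theorem affine_transport_matrix_identity {d : ℕ}
    (S₁ S₂ : Matrix (Fin d) (Fin d) ℝ) (h₁ : S₁.PosDef) (h₂ : S₂.PosDef)
    (A : Matrix (Fin d) (Fin d) ℝ)
    (hA : A = msqrt S₂ * (msqrt (msqrt S₂ * S₁ * msqrt S₂))⁻¹ * msqrt S₂) :
    A.PosDef ∧ A * S₁ * A = S₂ := by
  have hB : (msqrt S₂).PosDef := posDef_msqrt h₂
  have hM : (msqrt S₂ * S₁ * msqrt S₂).PosDef := h₁.conj_of_isHermitian hB.1 hB.isUnit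
  have hC : (msqrt (msqrt S₂ * S₁ * msqrt S₂)).PosDef := posDef_msqrt hM
  subst hA
  refine ⟨hC.inv.conj_of_isHermitian hB.1 hB.isUnit, ?_⟩
  rw [mul_inv_mul_conj_eq_mul_self hC.isUnit (msqrt_mul_self hM), msqrt_mul_self h₂]

end
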